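/- For every v ∈ (0,1] and every z ∈ (0,φ_v): one has p̃(z) − z/v > 0, the series Σ_{x=0}^∞ z^x W_v(x) converges, and Σ_{x=0}^∞ z^x W_v(x) = 1/(p̃(z) − z/v). -/

import Mathlib

open MeasureTheory Set
open scoped ENNReal

noncomputable section

namespace RW

/-- Probability generating function of `p`. -/
def ptilde (p : ℕ → ℝ) (z : ℝ) : ℝ := ∑' k : ℕ, p k * z ^ k

variable {Ω : Type*} [MeasurableSpace Ω]

/-- The upwards skip-free random walk started at `x` (driven by the claims `C`). -/
def walk (C : ℕ → Ω → ℕ) (x : ℤ) (n : ℕ) (ω : Ω) : ℤ :=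
  x + n - ∑ i ∈ Finset.range n, (C i ω : ℤ)

/-- First passage time (weakly) below `b`, `= ⊤` if it never happens. -/
def tauMinus (C : ℕ → Ω → ℕ) (x b : ℤ) (ω : Ω) : ℕ∞ :=
  sInf ((fun n : ℕ => (n : ℕ∞)) '' {n : ℕ | walk C x n ω ≤ b})

/-- First passage time (weakly) above `b`, `= ⊤` if it never happens. -/
def tauPlus (C : ℕ → Ω → ℕ) (x b : ℤ) (ω : Ω) : ℕ∞ :=
  sInf ((fun n : ℕ => (n : ℕ∞)) '' {n : ℕ | b ≤ walk C x n ω})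

/-- `E[f ; A]`, the expectation of `f` on the event `A`. -/
def Eind (P : Measure Ω) (A : Set Ω) (f : Ω → ℝ) : ℝ := ∫ ω, A.indicator f ω ∂P

/-- The first scale function `W_v`. -/
def W (P : Measure Ω) (C : ℕ → Ω → ℕ) (v p0 : ℝ) (y : ℤ) : ℝ :=
  if 0 ≤ y then
    1 / (p0 * Eind P {ω | tauPlus C 0 y ω < tauMinus C 0 (-1) ω}
          fun ω => v ^ (tauPlus C 0 y ω).toNat)
  else 0

/-- The joint transform of the ruin time and the deficit at ruin. -/
def Psi (P : Measure Ω) (C : ℕ → Ω → ℕ) (v w : ℝ) (x : ℤ) : ℝ :=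
  Eind P {ω | tauMinus C x (-1) ω < ⊤}
    fun ω => v ^ (tauMinus C x (-1) ω).toNat *
      w ^ (-(walk C x (tauMinus C x (-1) ω).toNat ω))

/-- The second scale function `Z_v(·, w)` (normalized so that `Z_v(0,w) = 1`). -/
def Z (P : Measure Ω) (C : ℕ → Ω → ℕ) (v w p0 : ℝ) (x : ℤ) : ℝ :=
  Psi P C v w x + p0 * (1 - Psi P C v w 0) * W P C v p0 x

/-- Cumulative capital injections of the walk reflected at `0`. -/
def Rstar (C : ℕ → Ω → ℕ) (x : ℤ) (n : ℕ) (ω : Ω) : ℤ :=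
  max 0 (-(Finset.range (n + 1)).inf' Finset.nonempty_range_add_one fun m => walk C x m ω)

/-- First entrance time of the walk reflected at `0` into `[b, ∞)`. -/
def tauTildePlus (C : ℕ → Ω → ℕ) (x b : ℤ) (ω : Ω) : ℕ∞ :=
  sInf ((fun n : ℕ => (n : ℕ∞)) '' {n : ℕ | b ≤ walk C x n ω + Rstar C x n ω})

/-- Cumulative dividends under the barrier policy at `b`. -/
def Rdiv (C : ℕ → Ω → ℕ) (x b : ℤ) (n : ℕ) (ω : Ω) : ℤ :=
  max 0 ((Finset.range (n + 1)).sup' Finset.nonempty_range_add_one fun m => walk C x m ω - b)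

/-- Single-period dividends under the barrier policy at `b`. -/
def rdiv (C : ℕ → Ω → ℕ) (x b : ℤ) (n : ℕ) (ω : Ω) : ℤ :=
  Rdiv C x b n ω - if n = 0 then 0 else Rdiv C x b (n - 1) ω

/-- Ruin time of the walk reflected at the barrier `b`. -/
def Truin (C : ℕ → Ω → ℕ) (x b : ℤ) (ω : Ω) : ℕ∞ :=
  sInf ((fun n : ℕ => (n : ℕ∞)) '' {n : ℕ | walk C x n ω - Rdiv C x b n ω ≤ -1})

lemma walk_stronglyMeasurable (C : ℕ → Ω → ℕ) (hC : ∀ i, Measurable (C i)) (x : ℤ) (n : ℕ) :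
    StronglyMeasurable (walk C x n) := by
  have h : Measurable fun ω => ∑ i ∈ Finset.range n, (C i ω : ℤ) :=
    Finset.measurable_sum _ fun i _ => (measurable_from_top.comp (hC i))
  exact (measurable_const.sub h).stronglyMeasurable

/-!
Encode a path by its list of claims. The event `τ_x⁺ < τ₋₁⁻` is the disjoint union of the cylinders
of the claim lists that first reach `x` while staying `≥ 0`, so the expectation in `W_v(x)` is the
total weight `∑ v^|l| ∏ p_{l_i}` of these lists. Cutting at the first visits to `1, …, x`
factorises it as `∏_{i<x} q(1 + i)`, where `q b` is the weight of rising one level before falling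
`b` levels, and conditioning on the first claim gives `q b = v ∑ₖ pₖ ∏_{i<k} q(b + 1 - k + i)`
(with `q b = 0` for `b ≤ 0`). For `W_v` this becomes `∑_{k ≤ n+1} pₖ W_v(n + 1 - k) = W_v(n) / v`,
i.e. `p̃(z) G(z) = 1 + (z/v) G(z)` for `G(z) = ∑ zˣ W_v(x)`. The series converges for `z < φ_v`:
`q` increases to some `s` with `v p̃(s) ≤ s`, so `φ_v ≤ s` by the intermediate value theorem,
while `W_v(x + 1) / W_v(x) = 1 / q(x + 1) → 1 / s`.
-/

open Finset Filter Topology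

lemma eq_of_first_hit {f : ℕ → ℤ} (hstep : ∀ m, f (m + 1) ≤ f m + 1) {t : ℤ} (h0 : f 0 ≤ t)
    {n : ℕ} (hn : t ≤ f n) (hlt : ∀ j < n, f j < t) : f n = t := by
  cases n with
  | zero => omega
  | succ n =>
    have := hstep n
    have := hlt n n.lt_succ_self
    omega

lemma exists_first_hit {f : ℕ → ℤ} (hstep : ∀ m, f (m + 1) ≤ f m + 1) {t : ℤ} (h0 : f 0 ≤ t)
    {N : ℕ} (hN : t ≤ f N) : ∃ m ≤ N, f m = t ∧ ∀ j < m, f j < t := by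
  classical
  have hex : ∃ m, t ≤ f m := ⟨N, hN⟩
  have hlt : ∀ j < Nat.find hex, f j < t := fun j hj => not_le.1 (Nat.find_min hex hj)
  exact ⟨Nat.find hex, Nat.find_min' hex hN, eq_of_first_hit hstep h0 (Nat.find_spec hex) hlt, hlt⟩

lemma tsum_mul_tsum_eq_one_add {R : Type*} [NormedRing R] [CompleteSpace R] {a g : ℕ → R} {c : R}
    (ha : Summable fun n => ‖a n‖) (hg : Summable fun n => ‖g n‖) (h0 : a 0 * g 0 = 1)
    (hrec : ∀ n, ∑ k ∈ range (n + 2), a k * g (n + 1 - k) = c * g n) :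
    (∑' n, a n) * ∑' n, g n = 1 + c * ∑' n, g n := by
  have hconv : Summable fun n => ∑ k ∈ range (n + 1), a k * g (n - k) :=
    (summable_nat_add_iff 1).1 (by simpa [hrec] using hg.of_norm.mul_left c)
  rw [tsum_mul_tsum_eq_tsum_sum_range_of_summable_norm ha hg, hconv.tsum_eq_zero_add,
    ← hg.of_norm.tsum_mul_left]
  simp [h0, ← hrec]

lemma natCast_lt_sInf_image_iff {T : Set ℕ} {n : ℕ} :
    (n : ℕ∞) < sInf (((↑) : ℕ → ℕ∞) '' T) ↔ ∀ m ≤ n, m ∉ T := by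
  rw [← ENat.add_one_le_iff (ENat.natCast_ne_top n), le_sInf_iff]
  simp only [Set.forall_mem_image]
  norm_cast
  exact ⟨fun h m hm hmT => by have := h hmT; omega,
    fun h a ha => not_lt.1 fun hlt => h a (by omega) ha⟩

lemma sInf_image_eq_natCast_iff {T : Set ℕ} {n : ℕ} :
    sInf (((↑) : ℕ → ℕ∞) '' T) = n ↔ n ∈ T ∧ ∀ m < n, m ∉ T := by
  rw [le_antisymm_iff, ← not_lt, natCast_lt_sInf_image_iff, le_sInf_iff]
  simp only [Set.forall_mem_image, Nat.cast_le, not_forall, not_not, exists_prop]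
  constructor
  · rintro ⟨⟨m, hm, hmT⟩, h⟩
    exact ⟨(hm.antisymm (h hmT)) ▸ hmT, fun m hm hmT => (h hmT).not_gt hm⟩
  · rintro ⟨hn, h⟩
    exact ⟨⟨n, le_rfl, hn⟩, fun a ha => not_lt.1 fun hlt => h a hlt ha⟩

section ptilde

variable {p : ℕ → ℝ} {v : ℝ}

lemma ptilde_zero : ptilde p 0 = p 0 := by
  rw [ptilde, tsum_eq_single 0 fun k hk => by simp [zero_pow hk]]
  simp

lemma continuousOn_ptilde (hnn : ∀ k, 0 ≤ p k) (hp : Summable p) :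
    ContinuousOn (ptilde p) (Icc 0 1) := by
  rw [continuousOn_iff_continuous_domRestrict]
  refine continuous_tsum (fun k => continuous_const.mul (continuous_subtype_val.pow k)) hp
    fun k x => ?_
  rw [norm_mul, norm_pow, Real.norm_of_nonneg (hnn k), Real.norm_of_nonneg x.2.1]
  exact mul_le_of_le_one_right (hnn k) (pow_le_one₀ x.2.1 x.2.2)

/-- By the intermediate value theorem, `v * p̃ - id` (positive at `0`) vanishes on `(0, t]`. -/
lemma le_of_mul_ptilde_le (hnn : ∀ k, 0 ≤ p k) (hp : Summable p) (hp0 : 0 < p 0) (hv : 0 < v)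
    {φ : ℝ} (hφ : IsLeast {ξ : ℝ | ξ ∈ Ioc (0 : ℝ) 1 ∧ ξ = v * ptilde p ξ} φ) {t : ℝ}
    (ht : t ∈ Ioc (0 : ℝ) 1) (h : v * ptilde p t ≤ t) : φ ≤ t := by
  have hcont : ContinuousOn (fun x => v * ptilde p x - x) (Icc 0 t) :=
    ((continuousOn_const.mul (continuousOn_ptilde hnn hp)).sub continuousOn_id).mono
      (Icc_subset_Icc_right ht.2)
  have hpos : 0 < v * ptilde p 0 - 0 := by rw [ptilde_zero, sub_zero]; exact mul_pos hv hp0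
  obtain ⟨ξ, ⟨hξ0, hξt⟩, hξ⟩ :=
    intermediate_value_Icc' ht.1.le hcont ⟨sub_nonpos.2 h, hpos.le⟩
  have hξpos : 0 < ξ := hξ0.lt_of_ne (by rintro rfl; exact hpos.ne' hξ)
  exact (hφ.2 ⟨⟨hξpos, hξt.trans ht.2⟩, (sub_eq_zero.1 hξ).symm⟩).trans hξt

lemma ptilde_sub_div_pos (hnn : ∀ k, 0 ≤ p k) (hp : Summable p) (hp0 : 0 < p 0) (hv : 0 < v)
    {φ : ℝ} (hφ : IsLeast {ξ : ℝ | ξ ∈ Ioc (0 : ℝ) 1 ∧ ξ = v * ptilde p ξ} φ) {z : ℝ}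
    (hz : z ∈ Ioo 0 φ) : 0 < ptilde p z - z / v := by
  by_contra! h
  have hle : v * ptilde p z ≤ z := by
    rw [sub_nonpos, le_div_iff₀ hv] at h
    linarith
  exact (le_of_mul_ptilde_le hnn hp hp0 hv hφ ⟨hz.1, hz.2.le.trans hφ.1.1.2⟩ hle).not_gt hz.2

end ptilde

/-- The equations satisfied by `q b = E₀[v ^ τ_1^+; τ_1^+ < τ_{-b}^-]`; `first_step` conditions on
the first claim `k`, after which the walk has to climb `k` levels, one at a time. -/
structure AscentEquations (v : ℝ) (p : ℕ → ℝ) (q : ℤ → ℝ) : Prop where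
  eq_zero : ∀ b ≤ 0, q b = 0
  mono : Monotone q
  le_one : ∀ b, q b ≤ 1
  first_step : ∀ b ≥ 1, q b = v * ∑' k : ℕ, p k * ∏ i ∈ range k, q (b + 1 - k + i)

def scale (p : ℕ → ℝ) (q : ℤ → ℝ) (x : ℕ) : ℝ := 1 / (p 0 * ∏ i ∈ range x, q (i + 1))

lemma scale_succ {p : ℕ → ℝ} {q : ℤ → ℝ} (x : ℕ) :
    scale p q (x + 1) = scale p q x / q (x + 1) := by
  rw [scale, scale, prod_range_succ, ← mul_assoc, div_div]

namespace AscentEquations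

variable {v : ℝ} {p : ℕ → ℝ} {q : ℤ → ℝ}

lemma nonneg (hq : AscentEquations v p q) (b : ℤ) : 0 ≤ q b := by
  simpa [hq.eq_zero _ (min_le_right b 0)] using hq.mono (min_le_left b 0)

lemma summable_first_step (hq : AscentEquations v p q) (hnn : ∀ k, 0 ≤ p k) (hp : Summable p)
    (b : ℤ) : Summable fun k : ℕ => p k * ∏ i ∈ range k, q (b + 1 - k + i) :=
  hp.of_nonneg_of_le (fun k => mul_nonneg (hnn k) (prod_nonneg fun _ _ => hq.nonneg _))
    fun k => mul_le_of_le_one_right (hnn k)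
      (prod_le_one (fun _ _ => hq.nonneg _) fun _ _ => hq.le_one _)

lemma mul_le_of_one_le (hq : AscentEquations v p q) (hnn : ∀ k, 0 ≤ p k) (hp : Summable p)
    (hv : 0 ≤ v) {b : ℤ} (hb : 1 ≤ b) : v * p 0 ≤ q b := by
  rw [hq.first_step b hb]
  gcongr
  simpa using (hq.summable_first_step hnn hp b).le_tsum 0 fun k _ =>
    mul_nonneg (hnn k) (prod_nonneg fun _ _ => hq.nonneg _)

lemma pos_of_one_le (hq : AscentEquations v p q) (hnn : ∀ k, 0 ≤ p k) (hp : Summable p)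
    (hp0 : 0 < p 0) (hv : 0 < v) {b : ℤ} (hb : 1 ≤ b) : 0 < q b :=
  (mul_pos hv hp0).trans_le (hq.mul_le_of_one_le hnn hp hv.le hb)

lemma bddAbove (hq : AscentEquations v p q) : BddAbove (range fun n : ℕ => q n) :=
  ⟨1, by rintro _ ⟨n, rfl⟩; exact hq.le_one n⟩

lemma tendsto_iSup (hq : AscentEquations v p q) :
    Tendsto (fun n : ℕ => q n) atTop (𝓝 (⨆ n : ℕ, q n)) :=
  tendsto_atTop_ciSup (fun _ _ h => hq.mono (Int.ofNat_le.2 h)) hq.bddAbove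

lemma le_iSup (hq : AscentEquations v p q) (n : ℕ) : q n ≤ ⨆ n : ℕ, q n :=
  le_ciSup hq.bddAbove n

lemma mul_ptilde_iSup_le (hq : AscentEquations v p q) (hnn : ∀ k, 0 ≤ p k) (hp : Summable p)
    (hv : 0 < v) : v * ptilde p (⨆ n : ℕ, q n) ≤ ⨆ n : ℕ, q n := by
  set s := ⨆ n : ℕ, q n
  have hs : 0 ≤ s := (hq.nonneg _).trans (hq.le_iSup 0)
  -- `q m ^ k` bounds each product in the first-step equation at level `m + K + 1`, for `k < K`
  have hpartial : ∀ K m : ℕ, v * ∑ k ∈ range K, p k * q m ^ k ≤ s := by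
    intro K m
    set b : ℤ := ((m + K + 1 : ℕ) : ℤ)
    calc v * ∑ k ∈ range K, p k * q m ^ k
        ≤ v * ∑ k ∈ range K, p k * ∏ i ∈ range k, q (b + 1 - k + i) := by
          refine mul_le_mul_of_nonneg_left (sum_le_sum fun k hk =>
            mul_le_mul_of_nonneg_left ?_ (hnn k)) hv.le
          calc q m ^ k = ∏ _i ∈ range k, q m := by simp
            _ ≤ ∏ i ∈ range k, q (b + 1 - k + i) :=
              prod_le_prod (fun _ _ => hq.nonneg _) fun i hi => hq.mono (by simp at hk hi; omega)
      _ ≤ v * ∑' k : ℕ, p k * ∏ i ∈ range k, q (b + 1 - k + i) := by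
          gcongr
          exact (hq.summable_first_step hnn hp b).sum_le_tsum _ fun k _ =>
            mul_nonneg (hnn k) (prod_nonneg fun _ _ => hq.nonneg _)
      _ = q b := (hq.first_step b (by omega)).symm
      _ ≤ s := hq.le_iSup _
  have hlim : ∀ K, v * ∑ k ∈ range K, p k * s ^ k ≤ s := fun K =>
    le_of_tendsto' ((tendsto_finsetSum _ fun k _ =>
      (hq.tendsto_iSup.pow k).const_mul (p k)).const_mul v) (hpartial K)
  have : ptilde p s ≤ s / v := Real.tsum_le_of_sum_range_le
    (fun k => mul_nonneg (hnn k) (pow_nonneg hs k)) fun K => (le_div_iff₀' hv).2 (hlim K)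
  rwa [le_div_iff₀' hv] at this

lemma le_iSup_of_isLeast (hq : AscentEquations v p q) (hnn : ∀ k, 0 ≤ p k) (hp : Summable p)
    (hp0 : 0 < p 0) (hv : 0 < v) {φ : ℝ}
    (hφ : IsLeast {ξ : ℝ | ξ ∈ Ioc (0 : ℝ) 1 ∧ ξ = v * ptilde p ξ} φ) : φ ≤ ⨆ n : ℕ, q n :=
  le_of_mul_ptilde_le hnn hp hp0 hv hφ
    ⟨(hq.pos_of_one_le hnn hp hp0 hv le_rfl).trans_le (hq.le_iSup 1),
      ciSup_le fun n => hq.le_one n⟩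
    (hq.mul_ptilde_iSup_le hnn hp hv)

lemma scale_pos (hq : AscentEquations v p q) (hnn : ∀ k, 0 ≤ p k) (hp : Summable p)
    (hp0 : 0 < p 0) (hv : 0 < v) (x : ℕ) : 0 < scale p q x :=
  one_div_pos.2 (mul_pos hp0 (Finset.prod_pos fun _ _ => hq.pos_of_one_le hnn hp hp0 hv (by omega)))

lemma sum_mul_scale (hq : AscentEquations v p q) (hnn : ∀ k, 0 ≤ p k) (hp : Summable p)
    (hp0 : 0 < p 0) (hv : 0 < v) (n : ℕ) :
    ∑ k ∈ range (n + 2), p k * scale p q (n + 1 - k) = scale p q n / v := by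
  set Q : ℕ → ℝ := fun x => ∏ i ∈ range x, q (i + 1)
  set R : ℕ → ℝ := fun k => ∏ i ∈ range k, q ((n : ℤ) + 1 + 1 - k + i)
  have hscale : ∀ x, scale p q x * (p 0 * Q x) = 1 := fun x =>
    one_div_mul_cancel (one_div_pos.1 (hq.scale_pos hnn hp hp0 hv x)).ne'
  have hsplit : ∀ k ≤ n + 1, Q (n + 1) = Q (n + 1 - k) * R k := by
    intro k hk
    simp only [Q, R]
    conv_lhs => rw [show n + 1 = (n + 1 - k) + k by omega, prod_range_add]
    congr 1
    refine prod_congr rfl fun i _ => congrArg q ?_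
    push_cast [Nat.cast_sub hk]
    ring
  -- the products with `k > n + 1` contain the factor `q (n + 2 - k) = 0`
  have hfirst : q (n + 1) = v * ∑ k ∈ range (n + 2), p k * R k := by
    rw [hq.first_step _ (by omega), tsum_eq_sum fun k hk => ?_]
    rw [Finset.mem_range, not_lt] at hk
    rw [prod_eq_zero (i := 0) (Finset.mem_range.2 (by omega))
      (hq.eq_zero _ (by push_cast; omega)), mul_zero]
  apply mul_right_cancel₀ (one_div_pos.1 (hq.scale_pos hnn hp hp0 hv (n + 1))).ne'
  calc (∑ k ∈ range (n + 2), p k * scale p q (n + 1 - k)) * (p 0 * Q (n + 1))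
      = ∑ k ∈ range (n + 2), p k * R k := by
        rw [sum_mul]
        refine sum_congr rfl fun k hk => ?_
        rw [hsplit k (by rw [Finset.mem_range] at hk; omega)]
        linear_combination (p k * R k) * hscale (n + 1 - k)
    _ = q (n + 1) / v := by rw [hfirst]; field_simp
    _ = scale p q n / v * (p 0 * Q (n + 1)) := by
        rw [show Q (n + 1) = Q n * q (n + 1) from prod_range_succ _ _]
        linear_combination (-(q (n + 1) / v)) * hscale n

lemma sum_mul_pow_mul_scale (hq : AscentEquations v p q) (hnn : ∀ k, 0 ≤ p k) (hp : Summable p)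
    (hp0 : 0 < p 0) (hv : 0 < v) (z : ℝ) (n : ℕ) :
    ∑ k ∈ range (n + 2), p k * z ^ k * (z ^ (n + 1 - k) * scale p q (n + 1 - k))
      = z / v * (z ^ n * scale p q n) := by
  have hsplit : ∀ k ∈ range (n + 2), p k * z ^ k * (z ^ (n + 1 - k) * scale p q (n + 1 - k))
      = z ^ (n + 1) * (p k * scale p q (n + 1 - k)) := fun k hk => by
    rw [← Nat.add_sub_cancel' (show k ≤ n + 1 by rw [Finset.mem_range] at hk; omega), pow_add,
      Nat.add_sub_cancel_left]
    ring
  rw [sum_congr rfl hsplit, ← mul_sum, hq.sum_mul_scale hnn hp hp0 hv, pow_succ]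
  ring

/-- Ratio test: consecutive terms have ratio `z / q (x + 1) → z / ⨆ n, q n`. -/
lemma summable_pow_mul_scale (hq : AscentEquations v p q) (hnn : ∀ k, 0 ≤ p k)
    (hp : Summable p) (hp0 : 0 < p 0) (hv : 0 < v) {z : ℝ} (hz : 0 < z)
    (hzs : z < ⨆ n : ℕ, q n) : Summable fun x : ℕ => z ^ x * scale p q x := by
  have hs : 0 < ⨆ n : ℕ, q n := hz.trans hzs
  have hterm : ∀ x, 0 < z ^ x * scale p q x := fun x =>
    mul_pos (pow_pos hz x) (hq.scale_pos hnn hp hp0 hv x)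
  refine summable_of_ratio_test_tendsto_lt_one ((div_lt_one hs).2 hzs)
    (Eventually.of_forall fun x => (hterm x).ne') ?_
  have hlim : Tendsto (fun x : ℕ => z / q (x + 1)) atTop (𝓝 (z / ⨆ n : ℕ, q n)) :=
    tendsto_const_nhds.div ((hq.tendsto_iSup.comp (tendsto_add_atTop_nat 1)).congr
      fun x => by simp) hs.ne'
  refine hlim.congr fun x => ?_
  have hqx : 0 < q (x + 1) := hq.pos_of_one_le hnn hp hp0 hv (by omega)
  rw [Real.norm_of_nonneg (hterm _).le, Real.norm_of_nonneg (hterm _).le, scale_succ, pow_succ]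
  field_simp [hz.ne', (hq.scale_pos hnn hp hp0 hv x).ne', hqx.ne']

theorem hasSum_scale (hq : AscentEquations v p q) (hnn : ∀ k, 0 ≤ p k) (hp : Summable p)
    (hp0 : 0 < p 0) (hv : 0 < v) {φ : ℝ}
    (hφ : IsLeast {ξ : ℝ | ξ ∈ Ioc (0 : ℝ) 1 ∧ ξ = v * ptilde p ξ} φ) {z : ℝ}
    (hz : z ∈ Ioo 0 φ) :
    HasSum (fun x : ℕ => z ^ x * scale p q x) (1 / (ptilde p z - z / v)) := by
  have hg := hq.summable_pow_mul_scale hnn hp hp0 hv hz.1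
    (hz.2.trans_le (hq.le_iSup_of_isLeast hnn hp hp0 hv hφ))
  have ha : Summable fun k => p k * z ^ k :=
    hp.of_nonneg_of_le (fun k => mul_nonneg (hnn k) (pow_nonneg hz.1.le k))
      fun k => mul_le_of_le_one_right (hnn k) (pow_le_one₀ hz.1.le (hz.2.le.trans hφ.1.1.2))
  have key : ptilde p z * ∑' x, z ^ x * scale p q x = 1 + z / v * ∑' x, z ^ x * scale p q x :=
    tsum_mul_tsum_eq_one_add (by simpa only [Real.norm_eq_abs] using summable_abs_iff.2 ha)
      (by simpa only [Real.norm_eq_abs] using summable_abs_iff.2 hg) (by simp [scale, hp0.ne'])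
      (hq.sum_mul_pow_mul_scale hnn hp hp0 hv z)
  rw [hg.hasSum_iff, eq_div_iff (ptilde_sub_div_pos hnn hp hp0 hv hφ hz).ne']
  linear_combination key

end AscentEquations

def height (l : List ℕ) : ℤ := l.length - l.sum

@[simp] lemma height_nil : height [] = 0 := by simp [height]

@[simp] lemma height_cons (k : ℕ) (l : List ℕ) : height (k :: l) = 1 - k + height l := by
  simp [height]
  ring

@[simp] lemma height_append (l l' : List ℕ) : height (l ++ l') = height l + height l' := by
  simp [height]
  ring

lemma height_take_succ_le (l : List ℕ) (m : ℕ) :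
    height (l.take (m + 1)) ≤ height (l.take m) + 1 := by
  rw [List.take_add_one, height_append]
  rcases l[m]? with _ | k <;> simp

def passagePaths (y : ℕ) (b : ℤ) : Set (List ℕ) :=
  {l | height l = y ∧ ∀ m < l.length, height (l.take m) < y ∧ -b < height (l.take m)}

lemma passagePaths_zero (b : ℤ) : passagePaths 0 b = {[]} := by
  refine Set.eq_singleton_iff_unique_mem.2 ⟨⟨by simp, by simp⟩, fun l hl => ?_⟩
  by_contra h
  simpa using (hl.2 0 (List.length_pos_iff.2 h)).1

lemma passagePaths_one_of_nonpos {b : ℤ} (hb : b ≤ 0) : passagePaths 1 b = ∅ := by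
  refine Set.eq_empty_of_forall_notMem fun l hl => ?_
  rcases l with _ | ⟨k, t⟩
  · simpa using hl.1
  · have := (hl.2 0 (by simp)).2
    simp at this
    omega

lemma passagePaths_mono (y : ℕ) {b b' : ℤ} (h : b ≤ b') : passagePaths y b ⊆ passagePaths y b' :=
  fun _ hl => ⟨hl.1, fun m hm => ⟨(hl.2 m hm).1, by linarith [(hl.2 m hm).2]⟩⟩

lemma eq_of_prefix_of_mem_passagePaths {y : ℕ} {b b' : ℤ} {l l' : List ℕ}
    (hl : l ∈ passagePaths y b) (hl' : l' ∈ passagePaths y b') (h : l <+: l') : l = l' := by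
  refine h.eq_of_length (h.length_le.antisymm (not_lt.1 fun hlt => ?_))
  have := (hl'.2 _ hlt).1
  rw [← List.prefix_iff_eq_take.1 h, hl.1] at this
  exact lt_irrefl _ this

lemma append_mem_passagePaths {y : ℕ} {b : ℤ} {a c : List ℕ} (ha : a ∈ passagePaths 1 b)
    (hc : c ∈ passagePaths y (b + 1)) : a ++ c ∈ passagePaths (y + 1) b := by
  refine ⟨by simp [ha.1, hc.1]; ring, fun m hm => ?_⟩
  rw [List.take_append, height_append]
  rcases lt_or_ge m a.length with hma | hma
  · have := ha.2 m hma
    rw [Nat.sub_eq_zero_of_le hma.le]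
    simp only [List.take_zero, height_nil, add_zero, Nat.cast_one, Nat.cast_add] at this ⊢
    omega
  · have := hc.2 (m - a.length) (by simp at hm; omega)
    rw [List.take_of_length_le hma, ha.1]
    push_cast
    omega

lemma exists_append_of_mem_passagePaths_succ {y : ℕ} {b : ℤ} {l : List ℕ}
    (hl : l ∈ passagePaths (y + 1) b) :
    ∃ a ∈ passagePaths 1 b, ∃ c ∈ passagePaths y (b + 1), l = a ++ c := by
  obtain ⟨m, hml, hm, hlt⟩ := exists_first_hit (f := fun m => height (l.take m))
    (height_take_succ_le l) (t := 1) (by simp) (N := l.length)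
    (by simp only [List.take_length, hl.1]; omega)
  refine ⟨l.take m, ⟨hm, fun j hj => ?_⟩, l.drop m, ⟨?_, fun j hj => ?_⟩,
    (List.take_append_drop m l).symm⟩
  · rw [List.length_take] at hj
    rw [List.take_take, min_eq_left (le_of_lt (lt_min_iff.1 hj).1)]
    exact ⟨hlt j (lt_min_iff.1 hj).1, (hl.2 j (lt_min_iff.1 hj).2).2⟩
  · have := congrArg height (List.take_append_drop m l)
    rw [height_append, hm, hl.1] at this
    push_cast at this
    omega
  · rw [List.length_drop] at hj
    have := hl.2 (m + j) (by omega)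
    rw [List.take_add, height_append, hm] at this
    push_cast at this ⊢
    omega

lemma cons_mem_passagePaths_one {b : ℤ} (hb : 1 ≤ b) {k : ℕ} {t : List ℕ}
    (ht : t ∈ passagePaths k (b + 1 - k)) : k :: t ∈ passagePaths 1 b := by
  refine ⟨by simp [ht.1], fun m hm => ?_⟩
  cases m with
  | zero => simp; omega
  | succ m =>
    have := ht.2 m (by simpa using hm)
    simp only [List.take_succ_cons, height_cons, Nat.cast_one]
    omega

lemma exists_cons_of_mem_passagePaths_one {b : ℤ} {l : List ℕ} (hl : l ∈ passagePaths 1 b) :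
    ∃ k t, l = k :: t ∧ t ∈ passagePaths k (b + 1 - k) := by
  rcases l with _ | ⟨k, t⟩
  · simpa using hl.1
  · refine ⟨k, t, rfl, by have := hl.1; simp at this; omega, fun m hm => ?_⟩
    have := hl.2 (m + 1) (by simpa using hm)
    simp only [List.take_succ_cons, height_cons, Nat.cast_one] at this
    omega

def pathWeight (v : ℝ) (p : ℕ → ℝ) (l : List ℕ) : ℝ≥0∞ :=
  (l.map fun k => ENNReal.ofReal (v * p k)).prod

@[simp] lemma pathWeight_cons (v : ℝ) (p : ℕ → ℝ) (k : ℕ) (l : List ℕ) :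
    pathWeight v p (k :: l) = ENNReal.ofReal (v * p k) * pathWeight v p l := by
  simp [pathWeight]

@[simp] lemma pathWeight_append (v : ℝ) (p : ℕ → ℝ) (l l' : List ℕ) :
    pathWeight v p (l ++ l') = pathWeight v p l * pathWeight v p l' := by
  simp [pathWeight]

def passageMass (v : ℝ) (p : ℕ → ℝ) (y : ℕ) (b : ℤ) : ℝ≥0∞ :=
  ∑' l : passagePaths y b, pathWeight v p l

section passageMass

variable {v : ℝ} {p : ℕ → ℝ}

lemma passageMass_zero (b : ℤ) : passageMass v p 0 b = 1 := by
  rw [passageMass, passagePaths_zero, tsum_singleton [] (pathWeight v p)]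
  simp [pathWeight]

lemma passageMass_one_of_nonpos {b : ℤ} (hb : b ≤ 0) : passageMass v p 1 b = 0 := by
  simp [passageMass, passagePaths_one_of_nonpos hb]

lemma passageMass_mono (y : ℕ) : Monotone (passageMass v p y) := fun _ _ h =>
  ENNReal.tsum_mono_subtype _ (passagePaths_mono y h)

/-- Cutting a path at its first visit to level `1`. -/
lemma passageMass_succ (y : ℕ) (b : ℤ) :
    passageMass v p (y + 1) b = passageMass v p 1 b * passageMass v p y (b + 1) := by
  let e : passagePaths 1 b × passagePaths y (b + 1) ≃ passagePaths (y + 1) b :=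
    Equiv.ofBijective (fun x => ⟨x.1 ++ x.2, append_mem_passagePaths x.1.2 x.2.2⟩) <| by
      refine ⟨fun ⟨⟨a, ha⟩, ⟨c, hc⟩⟩ ⟨⟨a', ha'⟩, ⟨c', hc'⟩⟩ h => ?_, fun ⟨l, hl⟩ => ?_⟩
      · have h : a ++ c = a' ++ c' := congrArg Subtype.val h
        obtain rfl : a = a' :=
          (List.prefix_or_prefix_of_prefix (List.prefix_append a c)
            (h ▸ List.prefix_append a' c')).elim (eq_of_prefix_of_mem_passagePaths ha ha')
            fun h' => (eq_of_prefix_of_mem_passagePaths ha' ha h').symm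
        obtain rfl := List.append_cancel_left h
        rfl
      · obtain ⟨a, ha, c, hc, rfl⟩ := exists_append_of_mem_passagePaths_succ hl
        exact ⟨⟨⟨a, ha⟩, ⟨c, hc⟩⟩, rfl⟩
  rw [passageMass, ← e.tsum_eq, ENNReal.tsum_prod', passageMass, passageMass,
    ← ENNReal.tsum_mul_right]
  refine tsum_congr fun a => ?_
  rw [← ENNReal.tsum_mul_left]
  exact tsum_congr fun c => pathWeight_append v p a c

lemma passageMass_eq_prod (y : ℕ) (b : ℤ) :
    passageMass v p y b = ∏ i ∈ range y, passageMass v p 1 (b + i) := by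
  induction y generalizing b with
  | zero => simp [passageMass_zero]
  | succ y ih =>
    rw [passageMass_succ, ih, prod_range_succ']
    simp only [Nat.cast_add, Nat.cast_one, Nat.cast_zero, add_zero, mul_comm]
    congr 1
    exact prod_congr rfl fun i _ => by rw [add_assoc, add_comm 1]

/-- Conditioning on the first claim. -/
lemma passageMass_one_eq_tsum {b : ℤ} (hb : 1 ≤ b) : passageMass v p 1 b =
    ∑' k : ℕ, ENNReal.ofReal (v * p k) * passageMass v p k (b + 1 - k) := by
  let e : (Σ k : ℕ, passagePaths k (b + 1 - k)) ≃ passagePaths 1 b :=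
    Equiv.ofBijective (fun x => ⟨x.1 :: x.2, cons_mem_passagePaths_one hb x.2.2⟩) <| by
      refine ⟨fun ⟨k, t, ht⟩ ⟨k', t', ht'⟩ h => ?_, fun ⟨l, hl⟩ => ?_⟩
      · obtain ⟨rfl, rfl⟩ := List.cons_eq_cons.1 (congrArg Subtype.val h)
        rfl
      · obtain ⟨k, t, rfl, ht⟩ := exists_cons_of_mem_passagePaths_one hl
        exact ⟨⟨k, t, ht⟩, rfl⟩
  rw [passageMass, ← e.tsum_eq, ENNReal.tsum_sigma']
  refine tsum_congr fun k => ?_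
  rw [passageMass, ← ENNReal.tsum_mul_left]
  exact tsum_congr fun t => pathWeight_cons v p k t

end passageMass

def ascent (v : ℝ) (p : ℕ → ℝ) (b : ℤ) : ℝ := (passageMass v p 1 b).toReal

lemma ascentEquations_ascent {v : ℝ} {p : ℕ → ℝ} (hle : ∀ y b, passageMass v p y b ≤ 1)
    (hv : 0 ≤ v) (hnn : ∀ k, 0 ≤ p k) : AscentEquations v p (ascent v p) where
  eq_zero b hb := by simp [ascent, passageMass_one_of_nonpos hb]
  mono _ _ h := ENNReal.toReal_mono (ne_top_of_le_ne_top ENNReal.one_ne_top (hle 1 _))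
    (passageMass_mono 1 h)
  le_one b := ENNReal.toReal_le_of_le_ofReal zero_le_one (by simpa using hle 1 b)
  first_step b hb := by
    have hfin : ∀ k : ℕ, ENNReal.ofReal (v * p k) * passageMass v p k (b + 1 - k) ≠ ⊤ :=
      fun k => ENNReal.mul_ne_top ENNReal.ofReal_ne_top
        (ne_top_of_le_ne_top ENNReal.one_ne_top (hle _ _))
    rw [ascent, passageMass_one_eq_tsum hb, ENNReal.tsum_toReal_eq hfin, ← tsum_mul_left]
    refine tsum_congr fun k => ?_
    rw [ENNReal.toReal_mul, ENNReal.toReal_ofReal (mul_nonneg hv (hnn k)), passageMass_eq_prod,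
      ENNReal.toReal_prod, mul_assoc]
    rfl

section claims

variable {α : Type*}

def claims (C : ℕ → α → ℕ) (ω : α) (n : ℕ) : List ℕ := (List.range n).map (C · ω)

def pathEvent (C : ℕ → α → ℕ) (l : List ℕ) : Set α := {ω | claims C ω l.length = l}

variable {C : ℕ → α → ℕ} {ω : α}

@[simp] lemma length_claims (n : ℕ) : (claims C ω n).length = n := by simp [claims]

lemma take_claims {m n : ℕ} (h : m ≤ n) : (claims C ω n).take m = claims C ω m := by
  simp [claims, ← List.map_take, List.take_range, min_eq_left h]

lemma pathEvent_eq_iInter (l : List ℕ) :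
    pathEvent C l = ⋂ i ∈ range l.length, C i ⁻¹' {l.getD i 0} := by
  ext ω
  simp only [pathEvent, claims, List.ext_getElem_iff, Set.mem_ofPred_eq, List.length_map, List.length_range, true_and, List.getElem_map,
    List.getElem_range, Set.mem_iInter, Finset.mem_range, Set.mem_preimage, Set.mem_singleton_iff]
  constructor <;> intro h i hi <;> simpa [hi] using h i hi

lemma prefix_or_prefix_of_mem_pathEvent {l l' : List ℕ} (h : ω ∈ pathEvent C l)
    (h' : ω ∈ pathEvent C l') : l <+: l' ∨ l' <+: l := by
  change claims C ω l.length = l at h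
  change claims C ω l'.length = l' at h'
  rcases le_total l.length l'.length with hle | hle
  · left
    rw [← h, ← h', ← take_claims hle]
    exact List.take_prefix _ _
  · right
    rw [← h, ← h', ← take_claims hle]
    exact List.take_prefix _ _

lemma disjoint_pathEvent {y : ℕ} {b : ℤ} {l l' : List ℕ} (hl : l ∈ passagePaths y b)
    (hl' : l' ∈ passagePaths y b) (hne : l ≠ l') : Disjoint (pathEvent C l) (pathEvent C l') :=
  Set.disjoint_left.2 fun _ h h' => hne <| (prefix_or_prefix_of_mem_pathEvent h h').elim
    (eq_of_prefix_of_mem_passagePaths hl hl') fun h =>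
      (eq_of_prefix_of_mem_passagePaths hl' hl h).symm

lemma walk_zero_eq_height (n : ℕ) : walk C 0 n ω = height (claims C ω n) := by
  induction n with
  | zero => simp [walk, claims]
  | succ n ih =>
    simp only [walk, claims, height, List.length_map, List.length_range] at ih ⊢
    simp [sum_range_succ, List.range_succ] at ih ⊢
    omega

lemma walk_succ_le (m : ℕ) : walk C 0 (m + 1) ω ≤ walk C 0 m ω + 1 := by
  simp only [walk, sum_range_succ]
  push_cast
  omega

lemma claims_mem_passagePaths_iff {y n : ℕ} {b : ℤ} : claims C ω n ∈ passagePaths y b ↔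
    walk C 0 n ω = y ∧ ∀ m < n, walk C 0 m ω < y ∧ -b < walk C 0 m ω := by
  simp only [passagePaths, Set.mem_ofPred_eq, length_claims, walk_zero_eq_height]
  refine and_congr Iff.rfl (forall₂_congr fun m hm => ?_)
  rw [take_claims hm.le]

lemma tauPlus_eq_and_lt_tauMinus_iff {y n : ℕ} :
    tauPlus C 0 y ω = n ∧ (n : ℕ∞) < tauMinus C 0 (-1) ω ↔ claims C ω n ∈ passagePaths y 1 := by
  simp only [tauPlus, tauMinus, sInf_image_eq_natCast_iff, natCast_lt_sInf_image_iff,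
    claims_mem_passagePaths_iff, Set.mem_ofPred_eq, not_le]
  constructor
  · rintro ⟨⟨hn, hlt⟩, hpos⟩
    exact ⟨eq_of_first_hit walk_succ_le (by simp [walk]) hn hlt,
      fun m hm => ⟨hlt m hm, hpos m hm.le⟩⟩
  · rintro ⟨hn, h⟩
    refine ⟨⟨hn.ge, fun m hm => (h m hm).1⟩, fun m hm => ?_⟩
    rcases hm.lt_or_eq with hm | rfl
    · exact (h m hm).2
    · omega

lemma tauPlus_eq_and_lt_tauMinus_of_mem_pathEvent {y : ℕ} {l : List ℕ}
    (hl : l ∈ passagePaths y 1) (hω : ω ∈ pathEvent C l) :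
    tauPlus C 0 y ω = l.length ∧ (l.length : ℕ∞) < tauMinus C 0 (-1) ω :=
  tauPlus_eq_and_lt_tauMinus_iff.2 (by rwa [show claims C ω l.length = l from hω])

lemma tauPlus_lt_tauMinus_iff {y : ℕ} :
    tauPlus C 0 y ω < tauMinus C 0 (-1) ω ↔ ∃ l ∈ passagePaths y 1, ω ∈ pathEvent C l := by
  refine ⟨fun h => ?_, fun ⟨l, hl, hω⟩ => ?_⟩
  · obtain ⟨n, hn⟩ := ENat.ne_top_iff_exists.1 (h.trans_le le_top).ne
    refine ⟨claims C ω n, tauPlus_eq_and_lt_tauMinus_iff.1 ⟨hn.symm, hn ▸ h⟩, ?_⟩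
    show claims C ω (claims C ω n).length = claims C ω n
    rw [length_claims]
  · obtain ⟨hτ, hlt⟩ := tauPlus_eq_and_lt_tauMinus_of_mem_pathEvent hl hω
    exact hτ ▸ hlt

lemma indicator_tauPlus_lt_tauMinus_eq_tsum (y : ℕ) (v : ℝ) :
    {ω | tauPlus C 0 y ω < tauMinus C 0 (-1) ω}.indicator (fun ω => v ^ (tauPlus C 0 y ω).toNat) ω
      = ∑' l : passagePaths y 1, (pathEvent C l).indicator (fun _ => v ^ l.1.length) ω := by
  by_cases h : ∃ l ∈ passagePaths y 1, ω ∈ pathEvent C l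
  · obtain ⟨l, hl, hω⟩ := h
    have hτ := (tauPlus_eq_and_lt_tauMinus_of_mem_pathEvent hl hω).1
    rw [Set.indicator_of_mem (s := {ω | tauPlus C 0 y ω < tauMinus C 0 (-1) ω})
        (tauPlus_lt_tauMinus_iff.2 ⟨l, hl, hω⟩), hτ, ENat.toNat_natCast,
      tsum_eq_single ⟨l, hl⟩ fun l' hne => Set.indicator_of_notMem (fun h' =>
        Set.disjoint_left.1 (disjoint_pathEvent l'.2 hl (Subtype.coe_ne_coe.2 hne)) h' hω) _,
      Set.indicator_of_mem hω]
  · rw [Set.indicator_of_notMem (s := {ω | tauPlus C 0 y ω < tauMinus C 0 (-1) ω})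
      (fun h' => h (tauPlus_lt_tauMinus_iff.1 h'))]
    refine ((tsum_congr fun l : passagePaths y 1 => ?_).trans tsum_zero).symm
    exact Set.indicator_of_notMem (fun h' => h ⟨l, l.2, h'⟩) _

end claims

section Probability

variable {P : Measure Ω} {C : ℕ → Ω → ℕ} {p : ℕ → ℝ} {v : ℝ}

lemma measurableSet_pathEvent (hC : ∀ i, Measurable (C i)) (l : List ℕ) :
    MeasurableSet (pathEvent C l) := by
  rw [pathEvent_eq_iInter]
  exact Finset.measurableSet_biInter _ fun i _ => hC i (measurableSet_singleton _)

lemma measure_pathEvent (hindep : ProbabilityTheory.iIndepFun C P)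
    (hdist : ∀ i k, P {ω | C i ω = k} = ENNReal.ofReal (p k)) (l : List ℕ) :
    P (pathEvent C l) = (l.map fun k => ENNReal.ofReal (p k)).prod := by
  rw [pathEvent_eq_iInter, hindep.measure_inter_preimage_eq_mul _ fun i _ =>
    measurableSet_singleton _, Finset.prod_range, ← List.prod_ofFn, ← List.ofFn_getElem_eq_map]
  refine congrArg (fun f => (List.ofFn f).prod) (funext fun i => ?_)
  rw [List.getD_eq_getElem _ _ i.2]
  exact hdist i _

lemma pathWeight_eq_mul_measure (hv : 0 ≤ v) (hindep : ProbabilityTheory.iIndepFun C P)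
    (hdist : ∀ i k, P {ω | C i ω = k} = ENNReal.ofReal (p k)) (l : List ℕ) :
    pathWeight v p l = ENNReal.ofReal (v ^ l.length) * P (pathEvent C l) := by
  rw [measure_pathEvent hindep hdist]
  induction l with
  | nil => simp [pathWeight]
  | cons k t ih =>
    rw [pathWeight_cons, ih, ENNReal.ofReal_mul hv, List.length_cons, pow_succ,
      ENNReal.ofReal_mul (pow_nonneg hv _), List.map_cons, List.prod_cons]
    ring

lemma pathWeight_le_measure (hv0 : 0 ≤ v) (hv1 : v ≤ 1) (hindep : ProbabilityTheory.iIndepFun C P)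
    (hdist : ∀ i k, P {ω | C i ω = k} = ENNReal.ofReal (p k)) (l : List ℕ) :
    pathWeight v p l ≤ P (pathEvent C l) := by
  rw [pathWeight_eq_mul_measure hv0 hindep hdist]
  exact mul_le_of_le_one_left zero_le (ENNReal.ofReal_le_one.2 (pow_le_one₀ hv0 hv1))

variable [IsProbabilityMeasure P]

lemma passageMass_le_one (hC : ∀ i, Measurable (C i)) (hindep : ProbabilityTheory.iIndepFun C P)
    (hdist : ∀ i k, P {ω | C i ω = k} = ENNReal.ofReal (p k)) (hv0 : 0 ≤ v) (hv1 : v ≤ 1)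
    (y : ℕ) (b : ℤ) : passageMass v p y b ≤ 1 :=
  calc passageMass v p y b ≤ ∑' l : passagePaths y b, P (pathEvent C l) :=
        ENNReal.tsum_le_tsum fun l => pathWeight_le_measure hv0 hv1 hindep hdist l
    _ = P (⋃ l : passagePaths y b, pathEvent C l) :=
        (measure_iUnion (fun l l' hne => disjoint_pathEvent l.2 l'.2 (Subtype.coe_ne_coe.2 hne))
          fun l => measurableSet_pathEvent hC l).symm
    _ ≤ 1 := prob_le_one

lemma Eind_eq_passageMass (hC : ∀ i, Measurable (C i)) (hindep : ProbabilityTheory.iIndepFun C P)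
    (hdist : ∀ i k, P {ω | C i ω = k} = ENNReal.ofReal (p k)) (hv0 : 0 ≤ v) (hv1 : v ≤ 1)
    (y : ℕ) : Eind P {ω | tauPlus C 0 y ω < tauMinus C 0 (-1) ω}
      (fun ω => v ^ (tauPlus C 0 y ω).toNat) = (passageMass v p y 1).toReal := by
  have hint : ∀ l : passagePaths y 1,
      ∫ ω, (pathEvent C l).indicator (fun _ => v ^ l.1.length) ω ∂P = (pathWeight v p l).toReal :=
    fun l => by
      rw [integral_indicator_const _ (measurableSet_pathEvent hC _),
        pathWeight_eq_mul_measure hv0 hindep hdist, ENNReal.toReal_mul,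
        ENNReal.toReal_ofReal (pow_nonneg hv0 _), smul_eq_mul, mul_comm, measureReal_def]
  have hfin : ∀ l : passagePaths y 1, pathWeight v p l ≠ ⊤ := fun l =>
    ((pathWeight_le_measure hv0 hv1 hindep hdist _).trans_lt (measure_lt_top _ _)).ne
  simp_rw [Eind, indicator_tauPlus_lt_tauMinus_eq_tsum]
  rw [← integral_tsum_of_summable_integral_norm
    (fun l => (integrable_const _).indicator (measurableSet_pathEvent hC _)), passageMass,
    ENNReal.tsum_toReal_eq hfin]
  · exact tsum_congr hint
  · simp_rw [norm_indicator_eq_indicator_norm, norm_pow, Real.norm_of_nonneg hv0, hint]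
    exact ENNReal.summable_toReal
      (ne_top_of_le_ne_top ENNReal.one_ne_top (passageMass_le_one hC hindep hdist hv0 hv1 y 1))

lemma W_eq_scale (hC : ∀ i, Measurable (C i)) (hindep : ProbabilityTheory.iIndepFun C P)
    (hdist : ∀ i k, P {ω | C i ω = k} = ENNReal.ofReal (p k)) (hv0 : 0 ≤ v) (hv1 : v ≤ 1)
    (x : ℕ) : W P C v (p 0) x = scale p (ascent v p) x := by
  rw [W, if_pos (Int.natCast_nonneg x), Eind_eq_passageMass hC hindep hdist hv0 hv1,
    passageMass_eq_prod, ENNReal.toReal_prod, scale]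
  simp_rw [ascent, add_comm (1 : ℤ)]

end Probability

/-- The generating function (z-transform) of the scale function `W_v`:
for `z ∈ (0, φ_v)`, `p̃(z) - z/v > 0`, the series converges, and it equals `1/(p̃(z)-z/v)`. -/
theorem W_generating_function
    (P : Measure Ω) [IsProbabilityMeasure P]
    (C : ℕ → Ω → ℕ) (p : ℕ → ℝ)
    (hC : ∀ i, Measurable (C i))
    (hindep : ProbabilityTheory.iIndepFun C P)
    (hdist : ∀ i k, P {ω | C i ω = k} = ENNReal.ofReal (p k))
    (hnn : ∀ k, 0 ≤ p k) (hsum : ∑' k, p k = 1) (hp0 : 0 < p 0)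
    (v : ℝ) (hv : v ∈ Set.Ioc (0 : ℝ) 1)
    (φv : ℝ) (hφ : IsLeast {ξ : ℝ | ξ ∈ Set.Ioc (0 : ℝ) 1 ∧ ξ = v * ptilde p ξ} φv) :
    ∀ z : ℝ, z ∈ Set.Ioo 0 φv →
      0 < ptilde p z - z / v ∧
      Summable (fun x : ℕ => z ^ x * W P C v (p 0) x) ∧
      ∑' x : ℕ, z ^ x * W P C v (p 0) x = 1 / (ptilde p z - z / v) := by
  intro z hz
  obtain ⟨hv0, hv1⟩ := hv
  have hp : Summable p := by
    by_contra h
    simp [tsum_eq_zero_of_not_summable h] at hsum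
  have hq := ascentEquations_ascent (passageMass_le_one hC hindep hdist hv0.le hv1) hv0.le hnn
  have hW := hq.hasSum_scale hnn hp hp0 hv0 hφ hz
  simp_rw [W_eq_scale hC hindep hdist hv0.le hv1]
  exact ⟨ptilde_sub_div_pos hnn hp hp0 hv0 hφ hz, hW.summable, hW.tsum_eq⟩

end RW
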